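/- For every integer i with 1 ≤ i ≤ n-1, one has σ_s(g, g^i) = 𝕢^{-s}. In particular σ_s(g, g) = 𝕢^{-s}. -/

import Mathlib

/-- The 3-cocycle `Φ_s` on the cyclic group `ℤ_n` (written additively via `ZMod n`,
where `g^i` corresponds to `(i : ZMod n)`), defined by
`Φ_s(g^i, g^j, g^k) = 𝕢^{s i (j+k-(j+k)')/n}` for `0 ≤ i,j,k ≤ n-1`,
where `i'` is the remainder of `i` modulo `n`. -/
noncomputable def PhiCocycle (n s : ℕ) (q : ℂ) (x y z : ZMod n) : ℂ :=
  q ^ (s * x.val * ((y.val + z.val - (y.val + z.val) % n) / n))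

/-- The 2-cocycle `σ_s` on `ℤ_n` defined from `Φ_s` by
`σ_s(x,y) = Φ_s(x,y,g)·Φ_s(xy,y⁻¹,x⁻¹)·Φ_s(x,yg,y⁻¹) / (Φ_s(xyg,y⁻¹,x⁻¹)·Φ_s(x,y,y⁻¹))`,
where the generator `g` corresponds to `(1 : ZMod n)`. -/
noncomputable def SigmaCocycle (n s : ℕ) (q : ℂ) (x y : ZMod n) : ℂ :=
  PhiCocycle n s q x y 1 * PhiCocycle n s q (x + y) (-y) (-x) *
      PhiCocycle n s q x (y + 1) (-y) /
    (PhiCocycle n s q (x + y + 1) (-y) (-x) * PhiCocycle n s q x y (-y))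


/-!
Write `Φ_s(x, y, z) = 𝕢 ^ (s · x̄ · c(y, z))`, where `x̄ ∈ [0, n)` is the residue of `x` and
`c(y, z) = (ȳ + z̄) / n ∈ {0, 1}` is the carry. For `y ≠ 0` the carries `c(y, -y)` and `c(-y, -1)`
are `1` and exactly one of `c(y, 1)`, `c(y + 1, -y)` is `1`, so
`σ_s(g, y) = 𝕢 ^ (s · (1 + r)) / 𝕢 ^ (s · (r' + 1))` with `r`, `r'` the residues of `y + 1`, `y + 2`.
This is `𝕢 ^ (-s)` because `r' ≡ r + 1 (mod n)` and `𝕢 ^ n = 1`.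
-/

namespace ZMod

variable {n : ℕ}

def carry (y z : ZMod n) : ℕ :=
  (y.val + z.val) / n

lemma carry_self_neg [NeZero n] {y : ZMod n} (hy : y ≠ 0) : carry y (-y) = 1 := by
  have : NeZero y := ⟨hy⟩
  rw [carry, val_neg_of_ne_zero, Nat.add_sub_cancel' (val_lt y).le, Nat.div_self (NeZero.pos n)]

variable [Fact (1 < n)]

lemma carry_neg_one {y : ZMod n} (hy : y ≠ 0) : carry y (-1) = 1 := by
  have : NeZero (1 : ZMod n) := ⟨one_ne_zero⟩
  have hlt := val_lt y
  have hpos := val_pos.mpr hy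
  rw [carry, val_neg_of_ne_zero, val_one]
  exact Nat.div_eq_of_lt_le (by omega) (by omega)

lemma carry_one_add_carry_add_one_neg {y : ZMod n} (hy : y ≠ 0) :
    carry y 1 + carry (y + 1) (-y) = 1 := by
  have : NeZero y := ⟨hy⟩
  have hlt := val_lt y
  have hpos := val_pos.mpr hy
  rw [carry, carry, val_add, val_neg_of_ne_zero, val_one]
  obtain h | h : y.val + 1 = n ∨ y.val + 1 < n := by omega
  · rw [h, Nat.div_self (NeZero.pos n), Nat.mod_self, Nat.div_eq_of_lt (by omega)]
  · rw [Nat.div_eq_of_lt h, Nat.mod_eq_of_lt h, zero_add]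
    exact Nat.div_eq_of_lt_le (by omega) (by omega)

end ZMod

lemma pow_zmod_val_add {M : Type*} [Monoid M] {n : ℕ} [NeZero n] {q : M} (hq : q ^ n = 1)
    (a b : ZMod n) : q ^ (a + b).val = q ^ a.val * q ^ b.val := by
  rw [ZMod.val_add, ← pow_eq_pow_mod _ hq, pow_add]

lemma phiCocycle_eq_pow_carry {n : ℕ} (s : ℕ) (q : ℂ) (x y z : ZMod n) :
    PhiCocycle n s q x y z = q ^ (s * x.val * ZMod.carry y z) := by
  rw [PhiCocycle, ZMod.carry, ← Nat.mul_div_self_eq_mod_sub_self]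
  rcases Nat.eq_zero_or_pos n with rfl | hn
  · simp
  · rw [Nat.mul_div_cancel_left _ hn]

theorem sigmaCocycle_one_left {n : ℕ} (hn : 1 < n) (s : ℕ) {q : ℂ} (hq : q ^ n = 1)
    {y : ZMod n} (hy : y ≠ 0) : SigmaCocycle n s q 1 y = (q ^ s)⁻¹ := by
  have : Fact (1 < n) := ⟨hn⟩
  have hq0 : q ≠ 0 := (IsUnit.of_pow_eq_one hq (by omega)).ne_zero
  have hshift : q ^ (1 + y + 1).val = q ^ (1 + y).val * q := by
    rw [pow_zmod_val_add hq, ZMod.val_one, pow_one]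
  simp only [SigmaCocycle, phiCocycle_eq_pow_carry, ZMod.carry_self_neg hy,
    ZMod.carry_neg_one (neg_ne_zero.mpr hy)]
  rw [mul_right_comm, ← pow_add, ← mul_add, ZMod.carry_one_add_carry_add_one_neg hy]
  simp only [ZMod.val_one, mul_one]
  rw [pow_mul' q s (1 + y + 1).val, hshift, mul_pow, ← pow_mul']
  field_simp

theorem sigmaCocycle_g_pow_general
    (n : ℕ) (hn : 2 ≤ n) (q : ℂ) (hq : IsPrimitiveRoot q n)
    (s : ℕ) :
    (∀ i : ℕ, 1 ≤ i → i ≤ n - 1 →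
      SigmaCocycle n s q 1 (i : ZMod n) = q ^ (-(s : ℤ))) ∧
    SigmaCocycle n s q 1 1 = q ^ (-(s : ℤ)) := by
  have hpow : ∀ i : ℕ, 1 ≤ i → i ≤ n - 1 →
      SigmaCocycle n s q 1 (i : ZMod n) = q ^ (-(s : ℤ)) := by
    intro i hi₁ hi₂
    have hi0 : (i : ZMod n) ≠ 0 := by
      rw [Ne, ZMod.natCast_eq_zero_iff]
      exact Nat.not_dvd_of_pos_of_lt (by omega) (by omega)
    rw [sigmaCocycle_one_left hn s hq.pow_eq_one hi0, zpow_neg, zpow_natCast]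
  exact ⟨hpow, by simpa using hpow 1 le_rfl (by omega)⟩

/-- For `1 ≤ i ≤ n-1`, `σ_s(g, g^i) = 𝕢^{-s}`; in particular, `σ_s(g,g) = 𝕢^{-s}`. -/
theorem sigmaCocycle_g_pow
    (n : ℕ) (hn : 2 ≤ n) (q : ℂ) (hq : IsPrimitiveRoot q n)
    (s : ℕ) (hs : s ≤ n - 1) :
    (∀ i : ℕ, 1 ≤ i → i ≤ n - 1 →
      SigmaCocycle n s q 1 (i : ZMod n) = q ^ (-(s : ℤ))) ∧
    SigmaCocycle n s q 1 1 = q ^ (-(s : ℤ)) :=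
  sigmaCocycle_g_pow_general n hn q hq s
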